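/- arXiv:1802.00286 — 4 statements merged into one kernel-verified Lean document; each statement's English description precedes it below -/
import Mathlib

section
/- Let A ⊆ D ⊆ ℂ be arbitrary sets and G ⊆ D ∖ A. Suppose that M is a continuous movement, t ∈ [0,1], and M_s⁻¹(x) ∈ D for every s ∈ [0,t] and every x ∈ G. If G and M_t⁻¹(G) are subsets of distinct connected components of D ∖ A, then G ⊆ W_M(A). -/
open MeasureTheory Set Filter

noncomputable section

/-- A rigid motion of the plane `ℂ`: a map `x ↦ u·x + c` with `|u| = 1`. -/
def IsRigidMotion (f : ℂ → ℂ) : Prop :=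
  ∃ u c : ℂ, ‖u‖ = 1 ∧ f = fun x => u * x + c

/-- A continuous movement: `M t` is a rigid motion for each `t ∈ [0,1]`,
`(t,x) ↦ M t x` is continuous on `[0,1] × ℂ`, and `M 0 = id`. -/
def IsContMovement (M : ℝ → ℂ → ℂ) : Prop :=
  (∀ t ∈ Set.Icc (0:ℝ) 1, IsRigidMotion (M t)) ∧
  ContinuousOn (fun p : ℝ × ℂ => M p.1 p.2) (Set.Icc (0:ℝ) 1 ×ˢ Set.univ) ∧
  M 0 = id

/-- `sweep M A = W_M(A)`, the set of points touched by the moving set `A`. -/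
def sweep (M : ℝ → ℂ → ℂ) (A : Set ℂ) : Set ℂ :=
  {y | ∃ t ∈ Set.Icc (0:ℝ) 1, ∃ x ∈ A, M t x = y}

/-- Property (K). -/
def HasPropK (A : Set ℂ) : Prop :=
  ∃ α : ℂ → ℂ, IsRigidMotion α ∧ α ≠ id ∧
    ∀ ε : ℝ, 0 < ε → ∃ M : ℝ → ℂ → ℂ, IsContMovement M ∧ M 1 = α ∧
      MeasureTheory.volume (sweep M A) < ENNReal.ofReal ε

/-- Property (Kˢ). -/
def HasPropKs (A : Set ℂ) : Prop :=
  ∀ α : ℂ → ℂ, IsRigidMotion α →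
    ∀ ε : ℝ, 0 < ε → ∃ M : ℝ → ℂ → ℂ, IsContMovement M ∧ M 1 = α ∧
      MeasureTheory.volume (sweep M A) < ENNReal.ofReal ε

/-- A trivial (K)-set: covered by a null set which is a union of parallel
lines or a union of concentric circles. -/
def IsTrivialKSet (A : Set ℂ) : Prop :=
  ∃ N : Set ℂ, MeasureTheory.volume N = 0 ∧ A ⊆ N ∧
    ((∃ v : ℂ, v ≠ 0 ∧ ∀ x ∈ N, ∀ t : ℝ, x + t * v ∈ N) ∨
     (∃ c : ℂ, ∀ x ∈ N, ∀ y : ℂ, ‖y - c‖ = ‖x - c‖ → y ∈ N))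

/-- The rotation `R_{c,φ}` about `c` by angle `φ`. -/
def rot (c : ℂ) (φ : ℝ) : ℂ → ℂ := fun x => Complex.exp (φ * Complex.I) * (x - c) + c

/-- `E` is the elementary movement `E^α` determined by the rigid motion `α`. -/
def IsElemMovement (α : ℂ → ℂ) (E : ℝ → ℂ → ℂ) : Prop :=
  (∃ c : ℂ, α = (fun x => x + c) ∧ ∀ t : ℝ, E t = fun x => x + (t : ℂ) * c) ∨
  (∃ (a : ℂ) (φ : ℝ), |φ| < Real.pi ∧ α = rot a φ ∧ ∀ t : ℝ, E t = rot a (t * φ))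

/-- The norm `‖f‖ = |u| + |v|` of an affine map `f x = u·x + v`. -/
def Lnorm (f : ℂ → ℂ) : ℝ := ‖f 1 - f 0‖ + ‖f 0‖

/-!
Suppose some `x ∈ G` is never hit by the moving set `A`. The inverse images `s ↦ M_s⁻¹(x)`,
`s ∈ [0, t]`, form a continuous path from `x` to `M_t⁻¹(x)`; it stays in `D` by assumption and
avoids `A`, since `M_s⁻¹(x) ∈ A` would mean `x = M_s(M_s⁻¹(x)) ∈ W_M(A)`. So `x` and `M_t⁻¹(x)`
lie in the same component of `D \ A`, contradicting the hypothesis on `G` and `M_t⁻¹(G)`.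
-/

namespace IsRigidMotion

variable {f : ℂ → ℂ}

lemma apply_one_sub_apply_zero_ne_zero (hf : IsRigidMotion f) : f 1 - f 0 ≠ 0 := by
  obtain ⟨u, c, hu, rfl⟩ := hf
  have hu0 : u ≠ 0 := by rintro rfl; simp at hu
  simpa using hu0

lemma eq_div_of_apply_eq (hf : IsRigidMotion f) {w x : ℂ} (h : f w = x) :
    w = (x - f 0) / (f 1 - f 0) := by
  rw [eq_div_iff hf.apply_one_sub_apply_zero_ne_zero]
  obtain ⟨u, c, -, rfl⟩ := hf
  simp only at h ⊢
  linear_combination h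

end IsRigidMotion

namespace IsContMovement

variable {M : ℝ → ℂ → ℂ}

lemma continuousOn_apply (hM : IsContMovement M) (x : ℂ) :
    ContinuousOn (fun s => M s x) (Icc 0 1) :=
  hM.2.1.comp (continuous_id.prodMk continuous_const).continuousOn fun _ hs => ⟨hs, mem_univ _⟩

/-- On `[0, 1]`, `M_s⁻¹(x) = (x - M_s 0) / (M_s 1 - M_s 0)`, which is continuous in `s`. -/
lemma continuousOn_inverse_apply (hM : IsContMovement M) {N : ℝ → ℂ → ℂ} {x : ℂ}
    (hN : ∀ s ∈ Icc (0 : ℝ) 1, M s (N s x) = x) :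
    ContinuousOn (fun s => N s x) (Icc 0 1) := by
  refine ContinuousOn.congr (f := fun s => (x - M s 0) / (M s 1 - M s 0)) ?_
    fun s hs => (hM.1 s hs).eq_div_of_apply_eq (hN s hs)
  exact (continuousOn_const.sub (hM.continuousOn_apply 0)).div
    ((hM.continuousOn_apply 1).sub (hM.continuousOn_apply 0))
    fun s hs => (hM.1 s hs).apply_one_sub_apply_zero_ne_zero

end IsContMovement

lemma ContinuousOn.mem_connectedComponentIn_of_mapsTo {X : Type*} [TopologicalSpace X]
    {S : Set X} {γ : ℝ → X} {a b : ℝ} (hab : a ≤ b) (hγ : ContinuousOn γ (Icc a b))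
    (hS : MapsTo γ (Icc a b) S) : γ b ∈ connectedComponentIn S (γ a) :=
  (isPreconnected_Icc.image γ hγ).subset_connectedComponentIn
    (mem_image_of_mem γ (left_mem_Icc.2 hab)) hS.image_subset
    (mem_image_of_mem γ (right_mem_Icc.2 hab))

theorem stmt_5_general (A D G : Set ℂ)
    (M : ℝ → ℂ → ℂ) (hM : IsContMovement M) (t : ℝ) (ht : t ∈ Set.Icc (0:ℝ) 1)
    (N : ℝ → ℂ → ℂ)
    (hN : ∀ s : ℝ, Function.LeftInverse (N s) (M s) ∧ Function.RightInverse (N s) (M s))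
    (hD : ∀ s ∈ Set.Icc 0 t, ∀ x ∈ G, N s x ∈ D)
    (y z : ℂ)
    (hGy : G ⊆ connectedComponentIn (D \ A) y)
    (hGz : N t '' G ⊆ connectedComponentIn (D \ A) z)
    (hne : connectedComponentIn (D \ A) y ≠ connectedComponentIn (D \ A) z) :
    G ⊆ sweep M A := by
  intro x hx
  by_contra hxA
  have hIcc : Icc 0 t ⊆ Icc (0 : ℝ) 1 := Icc_subset_Icc le_rfl ht.2
  have hpath : MapsTo (fun s => N s x) (Icc 0 t) (D \ A) := fun s hs =>
    ⟨hD s hs x hx, fun hA => hxA ⟨s, hIcc hs, N s x, hA, (hN s).2 x⟩⟩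
  have hN0 : N 0 x = x := by simpa [hM.2.2] using (hN 0).1 x
  have hNt : N t x ∈ connectedComponentIn (D \ A) x := by
    simpa only [hN0] using ContinuousOn.mem_connectedComponentIn_of_mapsTo ht.1
      ((hM.continuousOn_inverse_apply fun s _ => (hN s).2 x).mono hIcc) hpath
  rw [← connectedComponentIn_eq (hGy hx)] at hNt
  exact hne ((connectedComponentIn_eq hNt).trans
    (connectedComponentIn_eq (hGz (mem_image_of_mem _ hx))).symm)

/-- Lemma 5: if `G ⊆ D \ A`, `M` is a continuous movement with
`M s ⁻¹ (x) ∈ D` for all `s ∈ [0,t]`, `x ∈ G`, and `G` and `M t ⁻¹ (G)` lie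
in distinct connected components of `D \ A`, then `G ⊆ W_M(A)`. -/
theorem stmt_5 (A D G : Set ℂ) (hAD : A ⊆ D) (hG : G ⊆ D \ A)
    (M : ℝ → ℂ → ℂ) (hM : IsContMovement M) (t : ℝ) (ht : t ∈ Set.Icc (0:ℝ) 1)
    (N : ℝ → ℂ → ℂ)
    (hN : ∀ s : ℝ, Function.LeftInverse (N s) (M s) ∧ Function.RightInverse (N s) (M s))
    (hD : ∀ s ∈ Set.Icc 0 t, ∀ x ∈ G, N s x ∈ D)
    (y z : ℂ) (hy : y ∈ D \ A) (hz : z ∈ D \ A)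
    (hGy : G ⊆ connectedComponentIn (D \ A) y)
    (hGz : N t '' G ⊆ connectedComponentIn (D \ A) z)
    (hne : connectedComponentIn (D \ A) y ≠ connectedComponentIn (D \ A) z) :
    G ⊆ sweep M A :=
  stmt_5_general A D G M hM t ht N hN hD y z hGy hGz hne
end
end

section
/- Let α(x) = u·x + a be a rigid motion with |u| = 1, let n be a positive integer, and suppose |u − 1| ≤ 1/n. Then ‖αⁿ − j‖ ≥ (n/2)·‖α − j‖, where αⁿ denotes the n-th iterate of α. -/
open MeasureTheory Set Filter

noncomputable section

/- `αⁿ x = uⁿ x + a·S` with `S = ∑_{k<n} uᵏ`, and `uⁿ - 1 = S·(u - 1)`,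
so `‖αⁿ - j‖ = ‖S‖·‖α - j‖`. Since `‖uᵏ - 1‖ ≤ k‖u - 1‖`, the sum `S` stays within
`n(n-1)/2 · ‖u - 1‖ ≤ n/2` of `n`, hence `‖S‖ ≥ n/2`. -/

open Finset

theorem affine_iterate_apply {R : Type*} [CommSemiring R] (u a x : R) (m : ℕ) :
    (fun x => u * x + a)^[m] x = u ^ m * x + a * ∑ k ∈ range m, u ^ k := by
  induction m with
  | zero => simp
  | succ m ih =>
    rw [Function.iterate_succ_apply', ih, geom_sum_succ]
    ring

theorem Lnorm_affine (c b : ℂ) : Lnorm (fun x => c * x + b) = ‖c‖ + ‖b‖ := by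
  simp [Lnorm]

section GeomSum

variable {R : Type*} [SeminormedRing R] {u : R}

theorem norm_pow_sub_one_le (hu : ‖u‖ ≤ 1) (k : ℕ) :
    ‖u ^ k - 1‖ ≤ k * ‖u - 1‖ := by
  induction k with
  | zero => simp
  | succ k ih =>
    calc ‖u ^ (k + 1) - 1‖ = ‖u * (u ^ k - 1) + (u - 1)‖ := by
          rw [pow_succ']; noncomm_ring
      _ ≤ ‖u‖ * ‖u ^ k - 1‖ + ‖u - 1‖ :=
          (norm_add_le _ _).trans (by gcongr; exact norm_mul_le _ _)
      _ ≤ 1 * (k * ‖u - 1‖) + ‖u - 1‖ := by gcongr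
      _ = (k + 1 : ℕ) * ‖u - 1‖ := by push_cast; ring

theorem norm_natCast_sub_geom_sum_le (hu : ‖u‖ ≤ 1) (n : ℕ) :
    ‖(n : R) - ∑ k ∈ range n, u ^ k‖ ≤ n * (n - 1) / 2 * ‖u - 1‖ := by
  induction n with
  | zero => simp
  | succ n ih =>
    calc ‖((n + 1 : ℕ) : R) - ∑ k ∈ range (n + 1), u ^ k‖
        = ‖((n : R) - ∑ k ∈ range n, u ^ k) - (u ^ n - 1)‖ := by
          rw [sum_range_succ]; push_cast; abel_nf
      _ ≤ n * (n - 1) / 2 * ‖u - 1‖ + n * ‖u - 1‖ :=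
          (norm_sub_le _ _).trans (add_le_add ih (norm_pow_sub_one_le hu n))
      _ = (n + 1 : ℕ) * ((n + 1 : ℕ) - 1) / 2 * ‖u - 1‖ := by push_cast; ring

end GeomSum

theorem half_le_norm_geom_sum {𝕜 : Type*} [RCLike 𝕜] {u : 𝕜} (hu : ‖u‖ ≤ 1) {n : ℕ}
    (hclose : n * ‖u - 1‖ ≤ 1) : (n : ℝ) / 2 ≤ ‖∑ k ∈ range n, u ^ k‖ := by
  have hdist : ‖(n : 𝕜) - ∑ k ∈ range n, u ^ k‖ ≤ n / 2 :=
    calc _ ≤ n * (n - 1) / 2 * ‖u - 1‖ := norm_natCast_sub_geom_sum_le hu n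
      _ ≤ n / 2 := by nlinarith [norm_nonneg (u - 1)]
  calc (n : ℝ) / 2 = ‖(n : 𝕜)‖ - n / 2 := by rw [RCLike.norm_natCast]; ring
    _ ≤ ‖∑ k ∈ range n, u ^ k‖ := by
      linarith [norm_le_norm_sub_add (n : 𝕜) (∑ k ∈ range n, u ^ k)]

theorem stmt_9_general (u a : ℂ) (hu : ‖u‖ = 1) (n : ℕ)
    (hclose : ‖u - 1‖ ≤ 1 / (n : ℝ)) :
    (n : ℝ) / 2 * Lnorm ((fun x => u * x + a) - id) ≤
      Lnorm ((fun x => u * x + a)^[n] - id) := by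
  set S := ∑ k ∈ range n, u ^ k
  have hα : (fun x => u * x + a) - id = fun x => (u - 1) * x + a := by
    funext x; simp only [Pi.sub_apply, id_eq]; ring
  have hαn : (fun x => u * x + a)^[n] - id = fun x => (S * (u - 1)) * x + a * S := by
    funext x
    simp only [Pi.sub_apply, id_eq, affine_iterate_apply, geom_sum_mul, S]
    ring
  have hS : (n : ℝ) / 2 ≤ ‖S‖ := half_le_norm_geom_sum hu.le <|
    calc (n : ℝ) * ‖u - 1‖ ≤ n * (1 / n) := by gcongr
      _ ≤ 1 := by rw [one_div]; exact mul_inv_le_one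
  rw [hα, hαn, Lnorm_affine, Lnorm_affine, norm_mul, norm_mul]
  nlinarith [norm_nonneg (u - 1), norm_nonneg a]

/-- If `α(x) = ux + a`, `|u| = 1` and `|u − 1| ≤ 1/n`, then
`‖αⁿ − j‖ ≥ (n/2)·‖α − j‖`. -/
theorem stmt_9 (u a : ℂ) (hu : ‖u‖ = 1) (n : ℕ) (hn : 0 < n)
    (hclose : ‖u - 1‖ ≤ 1 / (n : ℝ)) :
    (n : ℝ) / 2 * Lnorm ((fun x => u * x + a) - id) ≤
      Lnorm ((fun x => u * x + a)^[n] - id) :=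
  stmt_9_general u a hu n hclose
end
end

section
/- Every set A ⊆ ℂ of Hausdorff dimension less than 1 has property (Kˢ). -/
/-!
Rotate `A` about the origin at constant angular speed `arg u` while translating it at constant
velocity `c`: this continuous movement ends at `x ↦ u * x + c`, and its sweep is the image of
`[0, 1] × A` under a `C¹` map. Since `dimH A < 1`, `A` is `μH[1]`-null; covering `A` by sets of
small total diameter `∑ rᵢ` and each strip `[0, 1] × tᵢ` by about `1 / rᵢ` squares of side `rᵢ`
shows that `[0, 1] × A` is `μH[2]`-null. Locally Lipschitz maps preserve `μH[2]`-null sets, and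
`μH[2]` dominates Lebesgue measure on `ℂ`, so the sweep has measure zero.
-/

open MeasureTheory Set Filter

noncomputable section

open scoped ENNReal NNReal

theorem ENNReal.exists_pos_le_tsum_lt {ι : Type*} [Countable ι] {r : ι → ℝ≥0∞} {ε : ℝ≥0∞}
    (h : ∑' i, r i < ε) :
    ∃ δ : ι → ℝ≥0, (∀ i, 0 < δ i) ∧ (∀ i, r i ≤ δ i) ∧ ∑' i, (δ i : ℝ≥0∞) < ε := by
  have hfin : ∀ i, r i ≠ ⊤ := ENNReal.ne_top_of_tsum_ne_top (h.trans_le le_top).ne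
  obtain ⟨η, hη, hηsum⟩ := ENNReal.exists_pos_sum_of_countable (tsub_pos_of_lt h).ne' ι
  have hδ : ∀ i, (((r i).toNNReal + η i : ℝ≥0) : ℝ≥0∞) = r i + η i := fun i => by
    rw [ENNReal.coe_add, ENNReal.coe_toNNReal (hfin i)]
  refine ⟨fun i => (r i).toNNReal + η i, fun i => add_pos_of_nonneg_of_pos zero_le (hη i),
    fun i => (hδ i).symm ▸ le_self_add, ?_⟩
  simp_rw [hδ]
  rw [ENNReal.tsum_add]
  calc ∑' i, r i + ∑' i, (η i : ℝ≥0∞) < ∑' i, r i + (ε - ∑' i, r i) :=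
        ENNReal.add_lt_add_left (h.trans_le le_top).ne hηsum
    _ = ε := add_tsub_cancel_of_le h.le

theorem Real.exists_Icc_subset_iUnion_Icc (a b : ℝ) {δ : ℝ≥0} (hδ : 0 < δ) :
    ∃ n : ℕ, (n : ℝ≥0∞) * δ ≤ ENNReal.ofReal (b - a) + δ ∧
      Icc a b ⊆ ⋃ k : Fin n, Icc (a + k * δ) (a + k * δ + δ) := by
  have hδ' : (0 : ℝ) < δ := hδ
  refine ⟨⌊(b - a) / δ⌋₊ + 1, ?_, fun x hx => ?_⟩
  · have hfloor : ENNReal.ofReal (⌊(b - a) / δ⌋₊ * δ) ≤ ENNReal.ofReal (b - a) := by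
      refine ENNReal.ofReal_le_ofReal_iff'.2 ?_
      rcases le_total 0 (b - a) with hab | hab
      · exact .inl ((le_div_iff₀ hδ').1 (Nat.floor_le (div_nonneg hab δ.2)))
      · have h0 : ⌊(b - a) / δ⌋₊ = 0 :=
          Nat.floor_of_nonpos (div_nonpos_of_nonpos_of_nonneg hab δ.2)
        right
        rw [h0]
        simp
    rw [ENNReal.ofReal_mul (Nat.cast_nonneg _), ENNReal.ofReal_natCast,
      ENNReal.ofReal_coe_nnreal] at hfloor
    rw [Nat.cast_add_one, add_mul, one_mul]
    gcongr
  · obtain ⟨hax, hxb⟩ := hx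
    set k := ⌊(x - a) / δ⌋₊
    have hk : k < ⌊(b - a) / δ⌋₊ + 1 := Nat.lt_succ_of_le (Nat.floor_le_floor (by gcongr))
    have hlow : (k : ℝ) * δ ≤ x - a :=
      (le_div_iff₀ hδ').1 (Nat.floor_le (div_nonneg (by linarith) δ.2))
    have hhigh : x - a < (k + 1) * δ := (div_lt_iff₀ hδ').1 (Nat.lt_floor_add_one _)
    exact mem_iUnion.2 ⟨⟨k, hk⟩, by constructor <;> linarith⟩

theorem ediam_Icc_prod_le {X : Type*} [PseudoEMetricSpace X] (u : ℝ) {δ : ℝ≥0} {t : Set X}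
    (ht : Metric.ediam t ≤ δ) : Metric.ediam (Icc u (u + δ) ×ˢ t) ≤ δ :=
  Metric.ediam_le fun p hp q hq => by
    rw [Prod.edist_eq]
    refine max_le ((Metric.edist_le_ediam_of_mem hp.1 hq.1).trans ?_)
      ((Metric.edist_le_ediam_of_mem hp.2 hq.2).trans ht)
    rw [Real.ediam_Icc, add_sub_cancel_left, ENNReal.ofReal_coe_nnreal]

section HausdorffNull

variable {X : Type*} [EMetricSpace X] [MeasurableSpace X] [BorelSpace X]

theorem exists_tsum_ediam_lt_of_hausdorffMeasure_one_eq_zero {s : Set X} (hs : μH[1] s = 0)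
    {ε : ℝ≥0∞} (hε : 0 < ε) :
    ∃ t : ℕ → Set X, s ⊆ ⋃ n, t n ∧ ∑' n, Metric.ediam (t n) < ε := by
  rw [Measure.hausdorffMeasure_apply, ENNReal.iSup_eq_zero] at hs
  have hcov := (ENNReal.iSup_eq_zero.1 (hs 1) one_pos).trans_lt hε
  simp only [iInf_lt_iff] at hcov
  obtain ⟨t, hst, -, hsum⟩ := hcov
  refine ⟨t, hst, lt_of_le_of_lt (ENNReal.tsum_le_tsum fun n => ?_) hsum⟩
  rcases (t n).eq_empty_or_nonempty with hn | hn
  · simp [hn]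
  · rw [iSup_pos hn, ENNReal.rpow_one]

theorem hausdorffMeasure_eq_zero_of_forall_cover {d : ℝ} {s : Set X}
    (h : ∀ ε : ℝ≥0∞, 0 < ε → ∃ (ι : Type) (_ : Countable ι) (t : ι → Set X),
      s ⊆ ⋃ i, t i ∧ (∀ i, Metric.ediam (t i) ≤ ε) ∧ ∑' i, Metric.ediam (t i) ^ d ≤ ε) :
    μH[d] s = 0 := by
  choose ι _ t hst hdiam hsum using fun n : ℕ => h (n : ℝ≥0∞)⁻¹ (by simp)
  refine le_antisymm ?_ zero_le
  calc μH[d] s ≤ liminf (fun n => ∑' i, Metric.ediam (t n i) ^ d) atTop :=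
        Measure.hausdorffMeasure_le_liminf_tsum d s _ ENNReal.tendsto_inv_nat_nhds_zero t
          (.of_forall hdiam) (.of_forall hst)
    _ ≤ liminf (fun n : ℕ => (n : ℝ≥0∞)⁻¹) atTop := liminf_le_liminf (.of_forall hsum)
    _ = 0 := ENNReal.tendsto_inv_nat_nhds_zero.liminf_eq

theorem hausdorffMeasure_two_Icc_prod_eq_zero (a b : ℝ) {s : Set X} (hs : μH[1] s = 0) :
    μH[2] (Icc a b ×ˢ s) = 0 := by
  refine hausdorffMeasure_eq_zero_of_forall_cover fun ε hε => ?_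
  -- `ε' ≤ 1` keeps each strip's count times width below `C`; `ε' ≤ ε / C` bounds the total area.
  set C : ℝ≥0∞ := ENNReal.ofReal (b - a) + 1
  set ε' := min (min ε 1) (ε / C)
  have hε' : 0 < ε' := by
    simp only [ε', lt_min_iff, hε, zero_lt_one, true_and]
    exact ENNReal.div_pos hε.ne' (by simp [C])
  obtain ⟨t, hst, ht⟩ := exists_tsum_ediam_lt_of_hausdorffMeasure_one_eq_zero hs hε'
  obtain ⟨δ, hδpos, htδ, hδsum⟩ := ENNReal.exists_pos_le_tsum_lt ht
  have hδε' : ∀ i, (δ i : ℝ≥0∞) ≤ ε' := fun i => (ENNReal.le_tsum i).trans hδsum.le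
  choose N hN hcov using fun i => Real.exists_Icc_subset_iUnion_Icc a b (hδpos i)
  have hNδ : ∀ i, (N i : ℝ≥0∞) * δ i ≤ C := fun i =>
    (hN i).trans (add_le_add le_rfl ((hδε' i).trans ((min_le_left _ _).trans (min_le_right _ _))))
  set piece : (Σ i, Fin (N i)) → Set (ℝ × X) := fun p =>
    Icc (a + p.2 * δ p.1) (a + p.2 * δ p.1 + δ p.1) ×ˢ t p.1
  have hpiece : ∀ p, Metric.ediam (piece p) ≤ δ p.1 := fun p => ediam_Icc_prod_le _ (htδ p.1)
  refine ⟨Σ i, Fin (N i), inferInstance, piece, ?_, fun p => ?_, ?_⟩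
  · rintro ⟨x, y⟩ ⟨hx, hy⟩
    obtain ⟨i, hi⟩ := mem_iUnion.1 (hst hy)
    obtain ⟨k, hk⟩ := mem_iUnion.1 (hcov i hx)
    exact mem_iUnion.2 ⟨⟨i, k⟩, hk, hi⟩
  · exact (hpiece p).trans ((hδε' p.1).trans ((min_le_left _ _).trans (min_le_left _ _)))
  · calc ∑' p, Metric.ediam (piece p) ^ (2 : ℝ)
        ≤ ∑' p : Σ i, Fin (N i), (δ p.1 : ℝ≥0∞) ^ 2 := ENNReal.tsum_le_tsum fun p => by
          rw [ENNReal.rpow_two]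
          exact pow_le_pow_left' (hpiece p) 2
      _ = ∑' i, (N i : ℝ≥0∞) * δ i * δ i := by
          rw [ENNReal.tsum_sigma']
          simp [sq, mul_assoc]
      _ ≤ ∑' i, C * δ i := by gcongr with i; exact hNδ i
      _ = C * ∑' i, (δ i : ℝ≥0∞) := ENNReal.tsum_mul_left
      _ ≤ C * (ε / C) := by gcongr; exact hδsum.le.trans (min_le_right _ _)
      _ ≤ ε := ENNReal.mul_div_le

end HausdorffNull

theorem LocallyLipschitz.hausdorffMeasure_image_eq_zero {X Y : Type*} [MetricSpace X]
    [SigmaCompactSpace X] [MeasurableSpace X] [BorelSpace X] [MetricSpace Y]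
    [MeasurableSpace Y] [BorelSpace Y] {f : X → Y} (hf : LocallyLipschitz f) {d : ℝ}
    (hd : 0 ≤ d) {s : Set X} (hs : μH[d] s = 0) : μH[d] (f '' s) = 0 := by
  have hs_eq : s = ⋃ n, s ∩ compactCovering X n := by
    rw [← inter_iUnion, iUnion_compactCovering, inter_univ]
  rw [hs_eq, image_iUnion]
  refine measure_iUnion_null fun n => le_antisymm ?_ zero_le
  obtain ⟨K, hK⟩ := hf.locallyLipschitzOn.exists_lipschitzOnWith_of_compact
    (isCompact_compactCovering X n)
  calc μH[d] (f '' (s ∩ compactCovering X n))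
      ≤ K ^ d * μH[d] (s ∩ compactCovering X n) :=
        (hK.mono inter_subset_right).hausdorffMeasure_image_le hd
    _ = 0 := by rw [measure_mono_null inter_subset_left hs, mul_zero]

theorem Complex.volume_le_hausdorffMeasure_two (s : Set ℂ) : volume s ≤ μH[2] s :=
  calc volume s = volume (measurableEquivRealProd.symm ⁻¹' s) :=
        (volume_preserving_equiv_real_prod.symm.measure_preimage_equiv s).symm
    _ = μH[2] (equivRealProd '' s) := by
        rw [hausdorffMeasure_prod_real, ← MeasurableEquiv.image_eq_preimage_symm]
        rfl
    _ ≤ μH[2] s := by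
        simpa using lipschitz_equivRealProd.hausdorffMeasure_image_le zero_le_two s

theorem sweep_eq_image (M : ℝ → ℂ → ℂ) (A : Set ℂ) :
    sweep M A = (fun p : ℝ × ℂ => M p.1 p.2) '' (Icc 0 1 ×ˢ A) := by
  ext y
  simp [sweep]

theorem volume_sweep_eq_zero {M : ℝ → ℂ → ℂ} (hM : LocallyLipschitz fun p : ℝ × ℂ => M p.1 p.2)
    {A : Set ℂ} (hA : μH[1] A = 0) : volume (sweep M A) = 0 := by
  refine le_antisymm ?_ zero_le
  calc volume (sweep M A) ≤ μH[2] (sweep M A) := Complex.volume_le_hausdorffMeasure_two _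
    _ = 0 := by
      rw [sweep_eq_image]
      exact hM.hausdorffMeasure_image_eq_zero zero_le_two
        (hausdorffMeasure_two_Icc_prod_eq_zero 0 1 hA)

def uniformMovement (θ : ℝ) (c : ℂ) : ℝ → ℂ → ℂ := fun t x =>
  Complex.exp ((θ * t : ℝ) * Complex.I) * x + t * c

theorem contDiff_uniformMovement (θ : ℝ) (c : ℂ) :
    ContDiff ℝ 1 fun p : ℝ × ℂ => uniformMovement θ c p.1 p.2 := by
  have hofReal : ContDiff ℝ 1 (fun t : ℝ => (t : ℂ)) := Complex.ofRealCLM.contDiff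
  have hexp : ContDiff ℝ 1 Complex.exp := (Complex.contDiff_exp (𝕜 := ℂ)).restrict_scalars ℝ
  unfold uniformMovement
  fun_prop

theorem isContMovement_uniformMovement (θ : ℝ) (c : ℂ) :
    IsContMovement (uniformMovement θ c) := by
  refine ⟨fun t _ => ⟨_, _, Complex.norm_exp_ofReal_mul_I _, rfl⟩,
    (contDiff_uniformMovement θ c).continuous.continuousOn, ?_⟩
  funext x
  simp [uniformMovement]

theorem uniformMovement_arg_one {u : ℂ} (hu : ‖u‖ = 1) (c : ℂ) :
    uniformMovement u.arg c 1 = fun x => u * x + c := by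
  have h := Complex.norm_mul_exp_arg_mul_I u
  rw [hu, Complex.ofReal_one, one_mul] at h
  funext x
  simp only [uniformMovement, Complex.ofReal_one, mul_one, one_mul, h]

/-- Every set of Hausdorff dimension less than 1 has property (Kˢ). -/
theorem stmt_13 (A : Set ℂ) (h : dimH A < 1) : HasPropKs A := by
  rintro α ⟨u, c, hu, rfl⟩ ε hε
  have hA : μH[1] A = 0 := by
    simpa using hausdorffMeasure_of_dimH_lt (d := 1) (by simpa using h)
  refine ⟨uniformMovement u.arg c, isContMovement_uniformMovement _ _,
    uniformMovement_arg_one hu c, ?_⟩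
  rw [volume_sweep_eq_zero (contDiff_uniformMovement _ _).locallyLipschitz hA]
  exact ENNReal.ofReal_pos.2 hε
end
end

section
/- Let C = {x ∈ ℂ : |x − p| = r} be a circle of centre p and radius r > 0, and let M be a continuous movement such that M₁(C) ∩ C = ∅. Then the open disc {x ∈ ℂ : |x − p| < r} is contained in W_M(C); in particular λ(W_M(C)) ≥ π·r². -/
open MeasureTheory Set Filter

noncomputable section

/-! A rigid motion `f` maps the circle `C = S(p, r)` onto `S(f p, r)`, so `y ∈ W_M(C)` as soon as
`|y - M_t p| = r` for some `t`. Two circles of radius `r` whose centres are at most `2r` apart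
meet (intermediate value theorem on the connected circle), so `M₁(C) ∩ C = ∅` forces
`|M₁ p - p| > 2r`. For `y` in the open disc, `t ↦ |y - M_t p|` therefore passes from `< r` at
`t = 0` to `> r` at `t = 1`, and takes the value `r` in between. -/

namespace IsRigidMotion

variable {f : ℂ → ℂ}

theorem isometry (hf : IsRigidMotion f) : Isometry f := by
  obtain ⟨u, c, hu, rfl⟩ := hf
  refine Isometry.of_dist_eq fun x y => ?_
  simp only [Complex.dist_eq, add_sub_add_right_eq_sub, ← mul_sub, norm_mul, hu, one_mul]

theorem surjective (hf : IsRigidMotion f) : Function.Surjective f := by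
  obtain ⟨u, c, hu, rfl⟩ := hf
  have hu0 : u ≠ 0 := norm_ne_zero_iff.mp (hu ▸ one_ne_zero)
  exact fun z => ⟨u⁻¹ * (z - c), by simp [mul_inv_cancel_left₀ hu0]⟩

theorem image_sphere (hf : IsRigidMotion f) (x : ℂ) (r : ℝ) :
    f '' Metric.sphere x r = Metric.sphere (f x) r := by
  rw [← hf.isometry.preimage_sphere, hf.surjective.image_preimage]

end IsRigidMotion

theorem Metric.sphere_inter_sphere_nonempty {E : Type*} [NormedAddCommGroup E] [NormedSpace ℝ E]
    (hE : 1 < Module.rank ℝ E) {p q : E} {r : ℝ} (hpq : dist p q ≤ 2 * r) :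
    (Metric.sphere p r ∩ Metric.sphere q r).Nonempty := by
  have hd : 0 ≤ dist p q := dist_nonneg
  have hr : 0 ≤ r := by linarith
  rcases eq_or_ne p q with rfl | hne
  · have : Nontrivial E := (rank_pos_iff_nontrivial (R := ℝ)).1 (zero_lt_one.trans hE)
    obtain ⟨x, hx⟩ := (NormedSpace.sphere_nonempty (x := p)).mpr hr
    exact ⟨x, hx, hx⟩
  have hne' : ‖p - q‖ ≠ 0 := norm_ne_zero_iff.mpr (sub_ne_zero.mpr hne)
  set v : E := ‖p - q‖⁻¹ • (p - q)
  have hv : ‖v‖ = 1 := by rw [norm_smul, norm_inv, norm_norm, inv_mul_cancel₀ hne']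
  have hline (s : ℝ) : dist (q + s • v) p = |dist p q - s| := by
    have hpv : p = q + dist p q • v := by rw [dist_eq_norm, smul_inv_smul₀ hne', add_sub_cancel]
    conv_lhs => rw [hpv]
    rw [dist_eq_norm, add_sub_add_left_eq_sub, ← sub_smul, norm_smul, hv, mul_one, Real.norm_eq_abs,
      abs_sub_comm]
  have hon (s : ℝ) (hs : |s| = r) : q + s • v ∈ Metric.sphere q r := by
    simp [norm_smul, hv, hs]
  obtain ⟨x, hxq, hxp⟩ := (isPreconnected_sphere hE q r).intermediate_value
    (hon r (abs_of_nonneg hr)) (hon (-r) (by simp [abs_of_nonneg hr]))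
    (f := fun x => dist x p) (continuous_id.dist continuous_const).continuousOn
    (show r ∈ Set.Icc _ _ by
      rw [hline, hline, sub_neg_eq_add, abs_of_nonneg (by positivity : 0 ≤ dist p q + r)]
      exact ⟨abs_sub_le_iff.mpr ⟨by linarith, by linarith⟩, by linarith⟩)
  exact ⟨x, hxp, hxq⟩

theorem IsContMovement.mem_sweep_sphere {M : ℝ → ℂ → ℂ} (hM : IsContMovement M) {p y : ℂ} {r : ℝ}
    (hp : dist y p < r) (hq : r ≤ dist y (M 1 p)) : y ∈ sweep M (Metric.sphere p r) := by
  obtain ⟨hrigid, hcont, hzero⟩ := hM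
  have hpath : ContinuousOn (fun t => dist y (M t p)) (Set.Icc 0 1) :=
    (continuous_const.dist continuous_id).comp_continuousOn <|
      hcont.comp (Continuous.prodMk_left p).continuousOn fun t ht => ⟨ht, Set.mem_univ p⟩
  obtain ⟨t, ht, hyt⟩ := intermediate_value_Icc zero_le_one hpath
    ⟨by simpa [hzero] using hp.le, hq⟩
  have hy : y ∈ M t '' Metric.sphere p r := by
    rw [(hrigid t ht).image_sphere, Metric.mem_sphere]
    exact hyt
  obtain ⟨x, hx, rfl⟩ := hy
  exact ⟨t, ht, x, hx, rfl⟩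

/-- If a continuous movement takes the circle `C` of centre `p` and radius
`r > 0` to a circle disjoint from `C`, then the moving circle touches every
point of the open disc; in particular `λ(W_M(C)) ≥ πr²`. -/
theorem stmt_15 (p : ℂ) (r : ℝ) (hr : 0 < r) (M : ℝ → ℂ → ℂ)
    (hM : IsContMovement M)
    (hdisj : (M 1) '' Metric.sphere p r ∩ Metric.sphere p r = ∅) :
    Metric.ball p r ⊆ sweep M (Metric.sphere p r) ∧
    ENNReal.ofReal (Real.pi * r ^ 2) ≤
      MeasureTheory.volume (sweep M (Metric.sphere p r)) := by
  have hM1 : IsRigidMotion (M 1) := hM.1 1 ⟨zero_le_one, le_rfl⟩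
  have hfar : 2 * r < dist p (M 1 p) := by
    by_contra! hle
    obtain ⟨z, hzp, hzq⟩ :=
      Metric.sphere_inter_sphere_nonempty (Complex.rank_real_complex ▸ Nat.one_lt_ofNat) hle
    rw [← hM1.image_sphere] at hzq
    exact hdisj.subset ⟨hzq, hzp⟩
  have hsub : Metric.ball p r ⊆ sweep M (Metric.sphere p r) := fun y hy =>
    hM.mem_sweep_sphere hy (by linarith [dist_triangle_left p (M 1 p) y, Metric.mem_ball.mp hy])
  refine ⟨hsub, le_of_eq_of_le ?_ (measure_mono hsub)⟩
  rw [Complex.volume_ball, ENNReal.ofReal_mul Real.pi_pos.le, ← ENNReal.ofReal_pow hr.le, mul_comm,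
    ← NNReal.coe_real_pi, ENNReal.ofReal_coe_nnreal]
end
end
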